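/- arXiv:1804.03046 — 3 statements merged into one kernel-verified Lean document; each statement's English description precedes it below -/
import Mathlib

section
/- For positive reals d, ν, ρ and any k ∈ ℕ, there exist constants C > 0 and ρ₀ > 0 such that for all ρ ∈ (0, ρ₀): |∑_{l=k}^∞ l^d e^{-ρ l^ν} − Γ((d+1)/ν)/ν · ρ^{-(d+1)/ν}| ≤ C · ρ^{-d/ν}. -/
/-!
On a unit interval `[a, a + 1]` the value `f a` differs from `∫ f` by at most the total variation
`∫ |f'|`; summing over the intervals `[a + n, a + n + 1]`, the series `∑ f (a + n)` differs from
`∫_a^∞ f` by at most `∫_a^∞ |f'|`. For `f x = x ^ d * exp (-ρ * x ^ ν)` the substitution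
`u = ρ x ^ ν` evaluates `∫_0^∞ f` as `Γ((d + 1) / ν) / ν * ρ ^ (-(d + 1) / ν)`, and bounds
`∫_0^∞ |f'| ≤ ∫_0^∞ (d x ^ (d - 1) + ρ ν x ^ (d + ν - 1)) exp (-ρ x ^ ν)` by a multiple of
`ρ ^ (-d / ν)`. The head `∫_0^k f ≤ k ^ (d + 1)` is bounded, hence also `O(ρ ^ (-d / ν))`
for `ρ < 1`.
-/

open Real Set MeasureTheory intervalIntegral Function

theorem iUnion_Ioc_add_natCast (a : ℝ) : ⋃ n : ℕ, Ioc (a + n) (a + n + 1) = Ioi a := by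
  ext x
  simp only [mem_iUnion, mem_Ioc, mem_Ioi]
  constructor
  · rintro ⟨n, hn, -⟩
    linarith [n.cast_nonneg (α := ℝ)]
  · intro hx
    obtain ⟨n, hn⟩ := Nat.exists_eq_add_one_of_ne_zero (Nat.ceil_pos.2 (sub_pos.2 hx)).ne'
    have hle := Nat.le_ceil (x - a)
    have hlt := Nat.ceil_lt_add_one (sub_pos.2 hx).le
    rw [hn, Nat.cast_add_one] at hle hlt
    exact ⟨n, by linarith, by linarith⟩

theorem pairwise_disjoint_Ioc_add_natCast (a : ℝ) :
    Pairwise (Disjoint on fun n : ℕ => Ioc (a + n) (a + n + 1)) := by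
  intro m n hmn
  simpa only [onFun, Int.cast_natCast] using
    pairwise_disjoint_Ioc_add_intCast a (Nat.cast_injective.ne hmn : (m : ℤ) ≠ n)

theorem MeasureTheory.IntegrableOn.hasSum_intervalIntegral_add_natCast {f : ℝ → ℝ} {a : ℝ}
    (hf : IntegrableOn f (Ioi a)) :
    HasSum (fun n : ℕ => ∫ x in a + n..a + n + 1, f x) (∫ x in Ioi a, f x) := by
  simp_rw [integral_of_le (le_add_of_nonneg_right zero_le_one)]
  rw [← iUnion_Ioc_add_natCast a] at hf ⊢
  exact hasSum_integral_iUnion (fun _ => measurableSet_Ioc) (pairwise_disjoint_Ioc_add_natCast a) hf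

theorem abs_sub_intervalIntegral_le_integral_abs_deriv {f f' : ℝ → ℝ} {a : ℝ}
    (hcont : ContinuousOn f (Icc a (a + 1))) (hderiv : ∀ x ∈ Ioo a (a + 1), HasDerivAt f (f' x) x)
    (hf' : IntervalIntegrable f' volume a (a + 1)) :
    |f a - ∫ x in a..a + 1, f x| ≤ ∫ x in a..a + 1, |f' x| := by
  have hvar : ∀ x ∈ Icc a (a + 1), |f a - f x| ≤ ∫ t in a..a + 1, |f' t| := by
    intro x hx
    rw [abs_sub_comm, ← integral_eq_sub_of_hasDeriv_right_of_le hx.1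
      (hcont.mono (Icc_subset_Icc_right hx.2))
      (fun t ht => (hderiv t ⟨ht.1, ht.2.trans_le hx.2⟩).hasDerivWithinAt)
      (hf'.mono_set (uIcc_subset_uIcc left_mem_uIcc (Icc_subset_uIcc hx)))]
    calc |∫ t in a..x, f' t| ≤ ∫ t in a..x, |f' t| := abs_integral_le_integral_abs hx.1
      _ ≤ ∫ t in a..a + 1, |f' t| :=
        integral_mono_interval le_rfl hx.1 hx.2 (Filter.Eventually.of_forall fun t => abs_nonneg _)
          hf'.abs
  have hsplit : f a - ∫ x in a..a + 1, f x = ∫ x in a..a + 1, (f a - f x) := by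
    rw [integral_sub intervalIntegrable_const (hcont.intervalIntegrable_of_Icc (by linarith)),
      intervalIntegral.integral_const]
    simp
  rw [hsplit]
  have hab : a ≤ a + 1 := by linarith
  calc |∫ x in a..a + 1, (f a - f x)| ≤ (∫ t in a..a + 1, |f' t|) * |a + 1 - a| :=
        norm_integral_le_of_norm_le_const (f := fun x => f a - f x) fun x hx =>
          hvar x (Ioc_subset_Icc_self (by rwa [uIoc_of_le hab] at hx))
    _ = ∫ t in a..a + 1, |f' t| := by simp

theorem abs_tsum_add_natCast_sub_integral_Ioi_le {f f' : ℝ → ℝ} {a : ℝ}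
    (hcont : ContinuousOn f (Ici a)) (hderiv : ∀ x ∈ Ioi a, HasDerivAt f (f' x) x)
    (hf : IntegrableOn f (Ioi a)) (hf' : IntegrableOn f' (Ioi a)) :
    |∑' n : ℕ, f (a + n) - ∫ x in Ioi a, f x| ≤ ∫ x in Ioi a, |f' x| := by
  set err : ℕ → ℝ := fun n => f (a + n) - ∫ x in a + n..a + n + 1, f x
  have hvar := IntegrableOn.hasSum_intervalIntegral_add_natCast (f := fun x => |f' x|) hf'.abs
  have herr (n : ℕ) : |err n| ≤ ∫ x in a + n..a + n + 1, |f' x| := by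
    have hn : a ≤ a + n := le_add_of_nonneg_right n.cast_nonneg
    refine abs_sub_intervalIntegral_le_integral_abs_deriv
      (hcont.mono fun x hx => hn.trans hx.1) (fun x hx => hderiv x (hn.trans_lt hx.1)) ?_
    exact (intervalIntegrable_iff_integrableOn_Ioc_of_le (by linarith)).2
      (hf'.mono_set fun x hx => hn.trans_lt hx.1)
  have herr_sum : Summable err := .of_norm_bounded hvar.summable herr
  have hsum : HasSum (fun n : ℕ => f (a + n)) (∑' n, err n + ∫ x in Ioi a, f x) := by
    simpa [err] using herr_sum.hasSum.add hf.hasSum_intervalIntegral_add_natCast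
  rw [hsum.tsum_eq, add_sub_cancel_right, abs_le]
  exact ⟨hasSum_le (fun n => (abs_le.1 (herr n)).1) hvar.neg herr_sum.hasSum,
    hasSum_le (fun n => (abs_le.1 (herr n)).2) herr_sum.hasSum hvar⟩

section RpowMulExp

variable {d ν ρ : ℝ}

theorem hasDerivAt_rpow_mul_exp_neg_mul_rpow {x : ℝ} (hx : 0 < x) :
    HasDerivAt (fun x : ℝ => x ^ d * exp (-ρ * x ^ ν))
      (d * (x ^ (d - 1) * exp (-ρ * x ^ ν)) - ρ * ν * (x ^ (d + ν - 1) * exp (-ρ * x ^ ν))) x := by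
  refine ((hasDerivAt_rpow_const (p := d) (.inl hx.ne')).mul
    (((hasDerivAt_rpow_const (p := ν) (.inl hx.ne')).const_mul (-ρ)).exp)).congr_deriv ?_
  rw [show d + ν - 1 = d + (ν - 1) by ring, rpow_add hx]
  ring

theorem integral_abs_deriv_rpow_mul_exp_neg_mul_rpow_le (hd : 0 < d) (hν : 0 < ν) (hρ : 0 < ρ) :
    ∫ x in Ioi 0,
        |d * (x ^ (d - 1) * exp (-ρ * x ^ ν)) - ρ * ν * (x ^ (d + ν - 1) * exp (-ρ * x ^ ν))| ≤
      (d / ν * Gamma (d / ν) + Gamma ((d + ν) / ν)) * ρ ^ (-(d / ν)) := by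
  have hu := integrableOn_rpow_mul_exp_neg_mul_rpow (s := d - 1) (by linarith) hν hρ
  have hv := integrableOn_rpow_mul_exp_neg_mul_rpow (s := d + ν - 1) (by linarith) hν hρ
  have hsum := (hu.const_mul d).add (hv.const_mul (ρ * ν))
  calc _ ≤ ∫ x in Ioi 0,
        (d * (x ^ (d - 1) * exp (-ρ * x ^ ν)) + ρ * ν * (x ^ (d + ν - 1) * exp (-ρ * x ^ ν))) := by
        refine setIntegral_mono_on ((hu.const_mul d).sub (hv.const_mul (ρ * ν))).abs hsum
          measurableSet_Ioi fun x (hx : 0 < x) => abs_le.2 ⟨?_, ?_⟩ <;>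
        nlinarith [show 0 ≤ d * (x ^ (d - 1) * exp (-ρ * x ^ ν)) by positivity,
          show 0 ≤ ρ * ν * (x ^ (d + ν - 1) * exp (-ρ * x ^ ν)) by positivity]
    _ = (d / ν * Gamma (d / ν) + Gamma ((d + ν) / ν)) * ρ ^ (-(d / ν)) := by
      have hpow : ρ ^ (-(d + ν) / ν) = ρ ^ (-(d / ν)) * ρ⁻¹ := by
        rw [show -(d + ν) / ν = -(d / ν) + -1 by field_simp; ring, rpow_add hρ, rpow_neg_one]
      rw [integral_add (hu.const_mul d) (hv.const_mul (ρ * ν)), MeasureTheory.integral_const_mul,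
        MeasureTheory.integral_const_mul, integral_rpow_mul_exp_neg_mul_rpow hν (by linarith) hρ,
        integral_rpow_mul_exp_neg_mul_rpow hν (by linarith) hρ, show d - 1 + 1 = d by ring,
        show d + ν - 1 + 1 = d + ν by ring, hpow, neg_div]
      field_simp

theorem abs_integral_Ioi_sub_integral_Ioi_zero_rpow_mul_exp_le (hd : 0 ≤ d) (hρ : 0 ≤ ρ) {a : ℝ}
    (ha : 0 ≤ a) (hint : IntegrableOn (fun x : ℝ => x ^ d * exp (-ρ * x ^ ν)) (Ioi 0)) :
    |(∫ x in Ioi a, x ^ d * exp (-ρ * x ^ ν)) - ∫ x in Ioi 0, x ^ d * exp (-ρ * x ^ ν)| ≤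
      a ^ d * a := by
  rw [abs_sub_comm, integral_Ioi_sub_Ioi hint ha]
  calc ‖∫ x in 0..a, x ^ d * exp (-ρ * x ^ ν)‖ ≤ a ^ d * |a - 0| := by
        refine norm_integral_le_of_norm_le_const fun x hx => ?_
        rw [uIoc_of_le ha] at hx
        have hxd : 0 ≤ x ^ d := rpow_nonneg hx.1.le d
        have hexp : exp (-ρ * x ^ ν) ≤ 1 := exp_le_one_iff.2 (by nlinarith [rpow_nonneg hx.1.le ν])
        rw [Real.norm_of_nonneg (mul_nonneg hxd (exp_pos _).le)]
        exact (mul_le_of_le_one_right hxd hexp).trans (rpow_le_rpow hx.1.le hx.2 hd)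
    _ = a ^ d * a := by rw [sub_zero, abs_of_nonneg ha]

theorem abs_tsum_rpow_mul_exp_neg_mul_rpow_sub_integral_le (hd : 0 < d) (hν : 0 < ν) (hρ : 0 < ρ)
    {a : ℝ} (ha : 0 ≤ a) :
    |∑' n : ℕ, (a + n) ^ d * exp (-ρ * (a + n) ^ ν) - ∫ x in Ioi 0, x ^ d * exp (-ρ * x ^ ν)| ≤
      (d / ν * Gamma (d / ν) + Gamma ((d + ν) / ν)) * ρ ^ (-(d / ν)) + a ^ d * a := by
  have hint := integrableOn_rpow_mul_exp_neg_mul_rpow (s := d) (by linarith) hν hρ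
  have hint' : IntegrableOn (fun x : ℝ =>
      d * (x ^ (d - 1) * exp (-ρ * x ^ ν)) - ρ * ν * (x ^ (d + ν - 1) * exp (-ρ * x ^ ν)))
      (Ioi 0) :=
    ((integrableOn_rpow_mul_exp_neg_mul_rpow (by linarith) hν hρ).const_mul d).sub
      ((integrableOn_rpow_mul_exp_neg_mul_rpow (by linarith) hν hρ).const_mul (ρ * ν))
  have hsub : Ioi a ⊆ Ioi 0 := Ioi_subset_Ioi ha
  have hcont : Continuous fun x : ℝ => x ^ d * exp (-ρ * x ^ ν) :=
    (continuous_rpow_const hd.le).mul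
      (continuous_exp.comp (continuous_const.mul (continuous_rpow_const hν.le)))
  have htail := abs_tsum_add_natCast_sub_integral_Ioi_le hcont.continuousOn
    (fun x hx => hasDerivAt_rpow_mul_exp_neg_mul_rpow (ha.trans_lt hx))
    (hint.mono_set hsub) (hint'.mono_set hsub)
  have hderiv_le := (setIntegral_mono_set hint'.abs
    (Filter.Eventually.of_forall fun x => abs_nonneg _) hsub.eventuallyLE).trans
    (integral_abs_deriv_rpow_mul_exp_neg_mul_rpow_le hd hν hρ)
  have hhead := abs_integral_Ioi_sub_integral_Ioi_zero_rpow_mul_exp_le hd.le hρ.le ha hint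
  calc _ ≤ _ := abs_sub_le _ (∫ x in Ioi a, x ^ d * exp (-ρ * x ^ ν)) _
    _ ≤ _ := add_le_add (htail.trans hderiv_le) hhead

end RpowMulExp

theorem stmt4 (d ν : ℝ) (hd : 0 < d) (hν : 0 < ν) (k : ℕ) :
    ∃ C > 0, ∃ ρ₀ > 0, ∀ ρ ∈ Set.Ioo (0 : ℝ) ρ₀,
      |(∑' l : ℕ, ((k + l : ℕ) : ℝ) ^ d * Real.exp (-ρ * ((k + l : ℕ) : ℝ) ^ ν)) -
        Real.Gamma ((d + 1) / ν) / ν * ρ ^ (-(d + 1) / ν)| ≤ C * ρ ^ (-(d / ν)) := by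
  refine ⟨d / ν * Gamma (d / ν) + Gamma ((d + ν) / ν) + (k : ℝ) ^ d * k, by positivity, 1, one_pos,
    fun ρ ⟨hρ, hρ1⟩ => ?_⟩
  have hone : 1 ≤ ρ ^ (-(d / ν)) :=
    one_le_rpow_of_pos_of_le_one_of_nonpos hρ hρ1.le (neg_nonpos.2 (by positivity))
  have hintegral : Gamma ((d + 1) / ν) / ν * ρ ^ (-(d + 1) / ν) =
      ∫ x in Ioi 0, x ^ d * exp (-ρ * x ^ ν) := by
    rw [integral_rpow_mul_exp_neg_mul_rpow hν (by linarith) hρ]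
    ring
  push_cast
  rw [hintegral]
  have hk : 0 ≤ (k : ℝ) ^ d * k := by positivity
  calc _ ≤ _ := abs_tsum_rpow_mul_exp_neg_mul_rpow_sub_integral_le hd hν hρ k.cast_nonneg
    _ ≤ _ := by nlinarith
end

section
/- Let Q(l) = l^r + b_{r-1} l^{r-1} + ⋯ + b₀ be a monic polynomial of degree r ≥ 1, and set k = ⌊max_{0 ≤ ι ≤ r-1} |b_ι|⌋ + 1. Then for all real l ≥ 2k(2^{r+1}/r + 1), Q(l) ≥ (l − 2k)^r. -/
/-!
Write `Q(l) = l^r + E(l)` with `E` the lower-order part. Each of its coefficients is at most `k`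
in absolute value, and for `l ≥ 2` the geometric sum `1 + l + ⋯ + l^(r-1)` is at most `2 l^(r-1)`,
so `|E(l)| ≤ 2k l^(r-1)`. On the other hand `(l - 2k)^r ≤ (l - 2k) l^(r-1) = l^r - 2k l^(r-1)`
once `l ≥ 2k`.
-/

open Polynomial Finset

theorem geom_sum_range_succ_le_two_mul_pow {x : ℝ} (hx : 2 ≤ x) (n : ℕ) :
    ∑ i ∈ range (n + 1), x ^ i ≤ 2 * x ^ n := by
  induction n with
  | zero => norm_num
  | succ n ih =>
    rw [sum_range_succ, pow_succ]
    nlinarith [pow_nonneg (by linarith : (0 : ℝ) ≤ x) n]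

theorem sub_pow_succ_le {a x : ℝ} (ha : 0 ≤ a) (hax : a ≤ x) (n : ℕ) :
    (x - a) ^ (n + 1) ≤ x ^ (n + 1) - a * x ^ n :=
  calc (x - a) ^ (n + 1) = (x - a) * (x - a) ^ n := pow_succ' _ _
    _ ≤ (x - a) * x ^ n :=
        mul_le_mul_of_nonneg_left (pow_le_pow_left₀ (by linarith) (by linarith) n) (by linarith)
    _ = x ^ (n + 1) - a * x ^ n := by ring

theorem abs_sum_coeff_mul_pow_le {p : ℝ[X]} {c x : ℝ} {n : ℕ} (hc : ∀ i < n, |p.coeff i| ≤ c)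
    (hx : 0 ≤ x) : |∑ i ∈ range n, p.coeff i * x ^ i| ≤ c * ∑ i ∈ range n, x ^ i :=
  calc |∑ i ∈ range n, p.coeff i * x ^ i| ≤ ∑ i ∈ range n, |p.coeff i * x ^ i| :=
        abs_sum_le_sum_abs _ _
    _ ≤ ∑ i ∈ range n, c * x ^ i := by
        refine sum_le_sum fun i hi => ?_
        rw [abs_mul, abs_of_nonneg (pow_nonneg hx i)]
        exact mul_le_mul_of_nonneg_right (hc i (mem_range.mp hi)) (pow_nonneg hx i)
    _ = c * ∑ i ∈ range n, x ^ i := (mul_sum _ _ _).symm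

theorem Polynomial.Monic.sub_pow_natDegree_le_eval {p : ℝ[X]} (hp : p.Monic) {c x : ℝ}
    (hc : ∀ i < p.natDegree, |p.coeff i| ≤ c) (hx : 2 ≤ x) (hcx : 2 * c ≤ x) :
    (x - 2 * c) ^ p.natDegree ≤ p.eval x := by
  have heval : p.eval x = x ^ p.natDegree + ∑ i ∈ range p.natDegree, p.coeff i * x ^ i := by
    rw [eval_eq_sum_range, sum_range_succ, hp.coeff_natDegree, one_mul, add_comm]
  obtain hdeg | ⟨n, hn⟩ : p.natDegree = 0 ∨ ∃ n, p.natDegree = n + 1 :=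
    (Nat.eq_zero_or_eq_succ_pred _).imp id fun h => ⟨_, h⟩
  · simp [heval, hdeg]
  have hc0 : 0 ≤ c := (abs_nonneg _).trans (hc 0 (by omega))
  rw [hn] at heval hc
  have htail : |∑ i ∈ range (n + 1), p.coeff i * x ^ i| ≤ 2 * c * x ^ n :=
    calc _ ≤ c * ∑ i ∈ range (n + 1), x ^ i :=
          abs_sum_coeff_mul_pow_le hc (by linarith)
      _ ≤ c * (2 * x ^ n) :=
          mul_le_mul_of_nonneg_left (geom_sum_range_succ_le_two_mul_pow hx n) hc0
      _ = 2 * c * x ^ n := by ring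
  rw [hn, heval]
  linarith [sub_pow_succ_le (by linarith : 0 ≤ 2 * c) hcx n,
    neg_abs_le (∑ i ∈ range (n + 1), p.coeff i * x ^ i)]

theorem stmt10 (r : ℕ) (hr : 1 ≤ r) (Q : Polynomial ℝ) (hQ : Q.Monic)
    (hdeg : Q.natDegree = r) (k : ℤ)
    (hk : k = ⌊(Finset.range r).sup' (Finset.nonempty_range_iff.mpr (by omega))
      (fun ι => |Q.coeff ι|)⌋ + 1) :
    ∀ l : ℝ, 2 * k * (2 ^ (r + 1) / (r : ℝ) + 1) ≤ l →
      (l - 2 * k) ^ r ≤ Q.eval l := by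
  intro l hl
  set M := (range r).sup' (nonempty_range_iff.mpr (by omega)) fun ι => |Q.coeff ι|
  have hk_eq : (k : ℝ) = ⌊M⌋ + 1 := by rw [hk]; push_cast; rfl
  have hcoeff : ∀ i < Q.natDegree, |Q.coeff i| ≤ k := fun i hi =>
    calc |Q.coeff i| ≤ M := le_sup' (fun ι => |Q.coeff ι|) (mem_range.mpr (hdeg ▸ hi))
      _ ≤ k := hk_eq ▸ (Int.lt_floor_add_one M).le
  have hk_one : (1 : ℝ) ≤ k := by
    have hM : 0 ≤ ⌊M⌋ := Int.floor_nonneg.mpr <|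
      (abs_nonneg _).trans (le_sup' (fun ι => |Q.coeff ι|) (mem_range.mpr hr))
    exact_mod_cast (by omega : 1 ≤ k)
  have hl_ge : 2 * (k : ℝ) ≤ l := by
    have : (0 : ℝ) ≤ 2 ^ (r + 1) / r := by positivity
    nlinarith
  rw [← hdeg]
  exact hQ.sub_pow_natDegree_le_eval hcoeff (by linarith) hl_ge
end

section
/- Let q(l) = l^ν + a_{ν-1} l^{ν-1} + ⋯ + a₀ be a monic polynomial of degree ν ≥ 1, positive and increasing for l ≥ 1; let Q(l) = l^r + b_{r-1} l^{r-1} + ⋯ + b₀ be a monic polynomial of degree r ≥ 1, positive for positive l; let d > 0 and p ∈ ℕ. Then there exist C > 0, ρ₀ > 0 such that for all ρ ∈ (0, ρ₀): |∑_{l=1}^∞ l^p Q(l)^d e^{-ρ q(l)} − Γ((p+rd+1)/ν)/ν · ρ^{-(p+rd+1)/ν}| ≤ C ρ^{-(p+rd)/ν}. -/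
/-!
Write `s = p + r d` and `f(x) = x^p Q(x)^d e^{-ρ q(x)}`. On `[n, n + 1]` the value `f(n)` differs
from `∫_n^{n+1} f` by at most `∫_n^{n+1} |f'|`, so the series differs from `∫_1^∞ f` by at most
`∫_1^∞ |f'|`. Next, `∫_1^∞ f` is compared pointwise with `∫_1^∞ x^s e^{-ρ x^ν}`, and
`∫_0^∞ x^s e^{-ρ x^ν} = Γ((s+1)/ν)/ν · ρ^{-(s+1)/ν}`, whose part over `(0, 1]` is at most `1`.

Only the behaviour of the amplitude `a = x^p Q^d` and the phase `φ = q` on `[1, ∞)` enters: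
`a - x^s` and `a'` are `O(x^{s-1})`, `φ - x^ν` and `φ'` are `O(x^{ν-1})`, and `φ ≥ c x^ν`.
Hence both error integrands are bounded by `(A x^{s-1} + ρ B x^{s+ν-1}) e^{-cρ x^ν}`, and the
substitution `x ↦ ρ^{-1/ν} x` turns its integral into a constant times `ρ^{-s/ν}`: the factor `ρ`
in front of the second term compensates for its extra `x^ν`.
-/

open Real Set Filter Topology MeasureTheory Asymptotics Polynomial

theorem Asymptotics.IsBigO.principal_Ici_of_atTop {f g : ℝ → ℝ} {a : ℝ} (h : f =O[atTop] g)
    (hf : ContinuousOn f (Ici a)) (hg : ContinuousOn g (Ici a)) (hg0 : ∀ x ∈ Ici a, g x ≠ 0) :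
    f =O[𝓟 (Ici a)] g := by
  obtain ⟨C, hC⟩ := h.bound
  obtain ⟨T, hT⟩ := eventually_atTop.1 hC
  have hcompact : f =O[𝓟 (Icc a T)] g :=
    ((hf.mono Icc_subset_Ici_self).isBigO_principal isCompact_Icc
      (by norm_num : ‖(1 : ℝ)‖ ≠ 0)).trans
      ((hg.mono Icc_subset_Ici_self).isBigO_rev_principal isCompact_Icc
        (fun x hx => hg0 x hx.1) (1 : ℝ))
  refine (hcompact.sup (isBigO_principal.2 ⟨C, fun x (hx : x ∈ Ici T) => hT x hx⟩)).mono ?_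
  rw [sup_principal, principal_mono]
  intro x hx
  rcases le_total x T with hxT | hTx
  exacts [Or.inl ⟨hx, hxT⟩, Or.inr hTx]

theorem isBigO_rpow_rpow_of_le {a b : ℝ} (h : a ≤ b) :
    (fun x : ℝ => x ^ a) =O[𝓟 (Ici 1)] fun x => x ^ b :=
  IsBigO.of_bound' <| eventually_principal.2 fun x (hx : 1 ≤ x) => by
    rw [norm_of_nonneg (by positivity), norm_of_nonneg (by positivity)]
    exact rpow_le_rpow_of_exponent_le hx h

theorem Asymptotics.IsBigO.mul_rpow {f g : ℝ → ℝ} {a b c : ℝ}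
    (hf : f =O[𝓟 (Ici 1)] fun x => x ^ a) (hg : g =O[𝓟 (Ici 1)] fun x => x ^ b)
    (h : a + b = c) : (fun x => f x * g x) =O[𝓟 (Ici 1)] fun x => x ^ c :=
  (hf.mul hg).trans_eventuallyEq <| eventually_principal.2 fun x (hx : 1 ≤ x) => by
    simp only [← h, rpow_add (by linarith : (0 : ℝ) < x)]

theorem rpow_le_add_rpow_of_mem_uIcc {a b t : ℝ} (ha : 0 < a) (hb : 0 < b) (ht : t ∈ uIcc a b)
    (e : ℝ) : t ^ e ≤ a ^ e + b ^ e := by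
  wlog hab : a ≤ b generalizing a b
  · rw [add_comm]; exact this hb ha (uIcc_comm a b ▸ ht) (le_of_not_ge hab)
  rw [uIcc_of_le hab] at ht
  have ht0 : 0 < t := ha.trans_le ht.1
  rcases le_total 0 e with he | he
  · linarith [rpow_le_rpow ht0.le ht.2 he, rpow_nonneg ha.le e]
  · linarith [rpow_le_rpow_of_nonpos ha ht.1 he, rpow_nonneg hb.le e]

theorem abs_rpow_sub_rpow_le {a b : ℝ} (ha : 0 < a) (hb : 0 < b) (e : ℝ) :
    |a ^ e - b ^ e| ≤ |e| * (a ^ (e - 1) + b ^ (e - 1)) * |a - b| := by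
  have hpos : ∀ t ∈ uIcc a b, 0 < t := fun t ht =>
    (lt_min ha hb).trans_le (by rw [uIcc] at ht; exact ht.1)
  have hderiv : ∀ t ∈ uIcc a b, HasDerivWithinAt (fun t => t ^ e) (e * t ^ (e - 1)) (uIcc a b) t :=
    fun t ht => (hasDerivAt_rpow_const (Or.inl (hpos t ht).ne')).hasDerivWithinAt
  have hbound : ∀ t ∈ uIcc a b, ‖e * t ^ (e - 1)‖ ≤ |e| * (a ^ (e - 1) + b ^ (e - 1)) :=
    fun t ht => by
      rw [norm_mul, norm_of_nonneg (rpow_nonneg (hpos t ht).le _), Real.norm_eq_abs]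
      exact mul_le_mul_of_nonneg_left (rpow_le_add_rpow_of_mem_uIcc ha hb ht _) (abs_nonneg e)
  simpa only [Real.norm_eq_abs] using (convex_uIcc a b).norm_image_sub_le_of_norm_hasDerivWithin_le
    hderiv hbound right_mem_uIcc left_mem_uIcc

theorem exp_neg_mul_le_exp_neg_mul {ρ u v : ℝ} (hρ : 0 ≤ ρ) (h : u ≤ v) :
    exp (-ρ * v) ≤ exp (-ρ * u) :=
  exp_le_exp.2 (by nlinarith)

theorem abs_exp_neg_sub_exp_neg_le {u v w : ℝ} (hu : w ≤ u) (hv : w ≤ v) :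
    |exp (-u) - exp (-v)| ≤ exp (-w) * |u - v| := by
  have hderiv : ∀ t ∈ Ici w, HasDerivWithinAt (fun t => exp (-t)) (-exp (-t)) (Ici w) t :=
    fun t _ => by simpa using (hasDerivAt_neg t).exp.hasDerivWithinAt
  have hbound : ∀ t ∈ Ici w, ‖-exp (-t)‖ ≤ exp (-w) := fun t (ht : w ≤ t) => by
    rw [norm_neg, norm_of_nonneg (exp_pos _).le]
    exact exp_le_exp.2 (neg_le_neg ht)
  simpa only [Real.norm_eq_abs] using
    (convex_Ici w).norm_image_sub_le_of_norm_hasDerivWithin_le hderiv hbound hv hu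

namespace Polynomial

theorem isBigO_principal_Ici_of_degree_le {P R : ℝ[X]} {a : ℝ} (h : P.degree ≤ R.degree)
    (hR : ∀ x ∈ Ici a, R.eval x ≠ 0) :
    (fun x => P.eval x) =O[𝓟 (Ici a)] fun x => R.eval x :=
  (isBigO_atTop_of_degree_le P R h).principal_Ici_of_atTop P.continuous.continuousOn
    R.continuous.continuousOn hR

theorem isBigO_rpow_of_degree_le {P : ℝ[X]} {k : ℕ} (h : P.degree ≤ k) :
    (fun x => P.eval x) =O[𝓟 (Ici 1)] fun x => x ^ (k : ℝ) := by
  simpa using isBigO_principal_Ici_of_degree_le (R := X ^ k) (by rwa [degree_X_pow])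
    (fun x (hx : 1 ≤ x) => by simp only [eval_pow, eval_X]; positivity)

variable {P : ℝ[X]}

theorem rpow_natDegree_isBigO_eval (hP : ∀ x ∈ Ici 1, P.eval x ≠ 0) :
    (fun x => x ^ (P.natDegree : ℝ)) =O[𝓟 (Ici 1)] fun x => P.eval x := by
  have hP0 : P ≠ 0 := fun h => hP 1 self_mem_Ici (by simp [h])
  simpa using isBigO_principal_Ici_of_degree_le (P := X ^ P.natDegree)
    (by rw [degree_X_pow, degree_eq_natDegree hP0]) hP

theorem isTheta_rpow_natDegree (hP : ∀ x ∈ Ici 1, 0 < P.eval x) :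
    (fun x => P.eval x) =Θ[𝓟 (Ici 1)] fun x => x ^ (P.natDegree : ℝ) :=
  ⟨isBigO_rpow_of_degree_le degree_le_natDegree,
    rpow_natDegree_isBigO_eval fun x hx => (hP x hx).ne'⟩

theorem exists_pos_mul_rpow_le_eval (hP : ∀ x ∈ Ici 1, 0 < P.eval x) :
    ∃ c > 0, ∀ x ∈ Ici 1, c * x ^ (P.natDegree : ℝ) ≤ P.eval x := by
  obtain ⟨C, hC, h⟩ := (rpow_natDegree_isBigO_eval fun x hx => (hP x hx).ne').exists_pos
  rw [isBigOWith_principal] at h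
  refine ⟨C⁻¹, inv_pos.2 hC, fun x hx => ?_⟩
  have hle := h x hx
  rw [norm_of_nonneg (rpow_nonneg (zero_le_one.trans hx) _), norm_of_nonneg (hP x hx).le] at hle
  rwa [inv_mul_le_iff₀ hC]

theorem isBigO_eval_derivative (hP : 0 < P.natDegree) :
    (fun x => P.derivative.eval x) =O[𝓟 (Ici 1)] fun x => x ^ ((P.natDegree : ℝ) - 1) := by
  simpa [Nat.cast_pred hP] using isBigO_rpow_of_degree_le
    (degree_le_of_natDegree_le (natDegree_derivative_le P))

theorem isBigO_deriv_eval (hdeg : 0 < P.natDegree) :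
    deriv (fun x => P.eval x) =O[𝓟 (Ici 1)] fun x => x ^ ((P.natDegree : ℝ) - 1) :=
  (isBigO_eval_derivative hdeg).congr_left fun _ => (Polynomial.deriv P).symm

theorem Monic.isBigO_sub_rpow (hP : P.Monic) (hdeg : 0 < P.natDegree) :
    (fun x => P.eval x - x ^ (P.natDegree : ℝ)) =O[𝓟 (Ici 1)]
      fun x => x ^ ((P.natDegree : ℝ) - 1) := by
  have h := self_sub_monomial_natDegree_leadingCoeff P
  rw [hP.leadingCoeff, monomial_one_right_eq_X_pow] at h
  simpa [← h, Nat.cast_pred hdeg] using isBigO_rpow_of_degree_le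
    (degree_le_of_natDegree_le (eraseLead_natDegree_le P))

theorem isBigO_eval_rpow (hP : ∀ x ∈ Ici 1, 0 < P.eval x) (e : ℝ) :
    (fun x => P.eval x ^ e) =O[𝓟 (Ici 1)] fun x => x ^ (P.natDegree * e) :=
  ((isTheta_rpow_natDegree hP).rpow (eventually_principal.2 fun x hx => (hP x hx).le)
    (eventually_principal.2 fun x (hx : 1 ≤ x) => by positivity)).isBigO.trans_eventuallyEq
    (eventually_principal.2 fun x (hx : 1 ≤ x) => by
      simp only [← rpow_mul (by linarith : (0 : ℝ) ≤ x)])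

theorem Monic.isBigO_eval_rpow_sub_rpow (hmonic : P.Monic) (hdeg : 0 < P.natDegree)
    (hP : ∀ x ∈ Ici 1, 0 < P.eval x) (e : ℝ) :
    (fun x => P.eval x ^ e - x ^ (P.natDegree * e)) =O[𝓟 (Ici 1)]
      fun x => x ^ (P.natDegree * e - 1) := by
  set n : ℝ := (P.natDegree : ℝ)
  have hlip : (fun x => |e| * (P.eval x ^ (e - 1) + (x ^ n) ^ (e - 1)) * (P.eval x - x ^ n))
      =O[𝓟 (Ici 1)] fun x => x ^ (n * e - 1) := by
    refine IsBigO.mul_rpow (a := n * (e - 1)) (IsBigO.const_mul_left ?_ _)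
      (hmonic.isBigO_sub_rpow hdeg) (by ring)
    refine (isBigO_eval_rpow hP _).add (IsBigO.of_bound' (eventually_principal.2 fun x hx => ?_))
    rw [← rpow_mul (zero_le_one.trans hx)]
  refine IsBigO.trans (IsBigO.of_bound' (eventually_principal.2 fun x (hx : 1 ≤ x) => ?_)) hlip
  have hx0 : 0 < x := by linarith
  simp only [Real.norm_eq_abs, abs_mul, abs_abs, rpow_mul hx0.le]
  have hmvt := abs_rpow_sub_rpow_le (hP x hx) (rpow_pos_of_pos hx0 n) e
  rwa [abs_of_nonneg (a := _ + _) (add_nonneg (rpow_nonneg (hP x hx).le _) (by positivity))]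

theorem hasDerivAt_rpow_mul_eval_rpow (p d : ℝ) {x : ℝ} (hx : 0 < x) (hP : 0 < P.eval x) :
    HasDerivAt (fun x => x ^ p * P.eval x ^ d)
      (p * x ^ (p - 1) * P.eval x ^ d + d * (x ^ p * (P.derivative.eval x * P.eval x ^ (d - 1))))
      x :=
  ((hasDerivAt_rpow_const (Or.inl hx.ne')).fun_mul
    ((P.hasDerivAt x).rpow_const (Or.inl hP.ne'))).congr_deriv (by ring)

theorem isBigO_deriv_rpow_mul_eval_rpow (hdeg : 0 < P.natDegree)
    (hP : ∀ x ∈ Ici 1, 0 < P.eval x) (p d : ℝ) :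
    deriv (fun x => x ^ p * P.eval x ^ d) =O[𝓟 (Ici 1)]
      fun x => x ^ (p + P.natDegree * d - 1) := by
  have hformula := IsBigO.add
    (((isBigO_refl (fun x : ℝ => x ^ (p - 1)) _).const_mul_left p).mul_rpow
      (isBigO_eval_rpow hP d) (c := p + P.natDegree * d - 1) (by ring))
    ((((isBigO_refl (fun x : ℝ => x ^ p) _).mul_rpow
      ((isBigO_eval_derivative hdeg).mul_rpow (isBigO_eval_rpow hP (d - 1))
        (c := P.natDegree * d - 1) (by ring)) (c := p + P.natDegree * d - 1)
      (by ring))).const_mul_left d)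
  refine hformula.congr' (eventually_principal.2 fun x (hx : 1 ≤ x) => ?_) EventuallyEq.rfl
  exact ((hasDerivAt_rpow_mul_eval_rpow p d (by linarith) (hP x hx)).deriv).symm

theorem Monic.isBigO_rpow_mul_eval_rpow_sub (hmonic : P.Monic) (hdeg : 0 < P.natDegree)
    (hP : ∀ x ∈ Ici 1, 0 < P.eval x) (p d : ℝ) :
    (fun x => x ^ p * P.eval x ^ d - x ^ (p + P.natDegree * d)) =O[𝓟 (Ici 1)]
      fun x => x ^ (p + P.natDegree * d - 1) := by
  refine ((isBigO_refl (fun x : ℝ => x ^ p) _).mul_rpow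
    (hmonic.isBigO_eval_rpow_sub_rpow hdeg hP d) (by ring)).congr'
    (eventually_principal.2 fun x (hx : 1 ≤ x) => ?_) EventuallyEq.rfl
  simp only [rpow_add (by linarith : (0 : ℝ) < x), mul_sub]

end Polynomial

theorem abs_sub_integral_le_integral_abs_deriv {f : ℝ → ℝ} {a : ℝ}
    (hf : ∀ x ∈ Icc a (a + 1), DifferentiableAt ℝ f x)
    (hf' : IntervalIntegrable (deriv f) volume a (a + 1)) :
    |f a - ∫ x in a..a + 1, f x| ≤ ∫ x in a..a + 1, |deriv f x| := by
  have ha : a ≤ a + 1 := by linarith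
  have hcont : ContinuousOn f (Icc a (a + 1)) := fun x hx =>
    (hf x hx).continuousAt.continuousWithinAt
  have hvar : ∀ y ∈ uIoc a (a + 1), ‖f a - f y‖ ≤ ∫ x in a..a + 1, |deriv f x| := by
    intro y hy
    rw [uIoc_of_le ha] at hy
    have hsub : uIcc a y ⊆ Icc a (a + 1) := by
      rw [uIcc_of_le hy.1.le]; exact Icc_subset_Icc_right hy.2
    rw [Real.norm_eq_abs, abs_sub_comm, ← intervalIntegral.integral_eq_sub_of_hasDerivAt
      (fun x hx => (hf x (hsub hx)).hasDerivAt) (hf'.mono_set (uIcc_of_le ha ▸ hsub))]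
    exact (intervalIntegral.abs_integral_le_integral_abs hy.1.le).trans
      (intervalIntegral.integral_mono_interval le_rfl hy.1.le hy.2
        (Eventually.of_forall fun x => abs_nonneg _) hf'.abs)
  have hint : IntervalIntegrable f volume a (a + 1) :=
    (hcont.mono (uIcc_of_le ha).subset).intervalIntegrable
  calc |f a - ∫ x in a..a + 1, f x| = |∫ x in a..a + 1, (f a - f x)| := by
        rw [intervalIntegral.integral_sub intervalIntegrable_const hint,
          intervalIntegral.integral_const, add_sub_cancel_left, one_smul]
    _ ≤ (∫ x in a..a + 1, |deriv f x|) * |a + 1 - a| :=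
        intervalIntegral.norm_integral_le_of_norm_le_const hvar
    _ = ∫ x in a..a + 1, |deriv f x| := by rw [add_sub_cancel_left, abs_one, mul_one]

theorem intervalIntegrable_of_integrableOn_Ioi {g : ℝ → ℝ} {a b c : ℝ}
    (hg : IntegrableOn g (Ioi a)) (hab : a ≤ b) (hbc : b ≤ c) : IntervalIntegrable g volume b c :=
  (intervalIntegrable_iff_integrableOn_Ioc_of_le hbc).2 (hg.mono_set fun _ hx => hab.trans_lt hx.1)

theorem intervalIntegral_le_integral_Ioi {g : ℝ → ℝ} {a b : ℝ} (hg : IntegrableOn g (Ioi a))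
    (hg0 : ∀ x ∈ Ioi a, 0 ≤ g x) (hab : a ≤ b) : ∫ x in a..b, g x ≤ ∫ x in Ioi a, g x := by
  rw [intervalIntegral.integral_of_le hab]
  exact setIntegral_mono_set hg ((ae_restrict_mem measurableSet_Ioi).mono hg0)
    Ioc_subset_Ioi_self.eventuallyLE

theorem sum_range_integral_nat_add {g : ℝ → ℝ} {a : ℝ} (hg : IntegrableOn g (Ioi a)) (N : ℕ) :
    ∑ n ∈ Finset.range N, ∫ x in (n + a)..(n + a + 1), g x = ∫ x in a..(N + a), g x := by
  have := intervalIntegral.sum_integral_adjacent_intervals (a := fun n : ℕ => (n : ℝ) + a) (n := N)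
    fun k _ => intervalIntegrable_of_integrableOn_Ioi hg (by simp) (by push_cast; linarith)
  simpa [add_right_comm] using this

theorem abs_nat_add_sub_integral_le {f : ℝ → ℝ} {a : ℝ}
    (hf : ∀ x ∈ Ici a, DifferentiableAt ℝ f x) (hf' : IntegrableOn (deriv f) (Ioi a)) (n : ℕ) :
    |f (n + a) - ∫ x in (n + a)..(n + a + 1), f x| ≤ ∫ x in (n + a)..(n + a + 1), |deriv f x| :=
  abs_sub_integral_le_integral_abs_deriv
    (fun x hx => hf x (le_trans (by simp) hx.1))
    (intervalIntegrable_of_integrableOn_Ioi hf' (by simp) (by linarith))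

theorem summable_nat_add_of_integrableOn_deriv {f : ℝ → ℝ} {a : ℝ}
    (hf : ∀ x ∈ Ici a, DifferentiableAt ℝ f x) (hfi : IntegrableOn f (Ioi a))
    (hf' : IntegrableOn (deriv f) (Ioi a)) : Summable fun n : ℕ => f (n + a) := by
  refine Summable.of_abs (summable_of_sum_range_le (fun n => abs_nonneg _)
    (c := (∫ x in Ioi a, |f x|) + ∫ x in Ioi a, |deriv f x|) fun N => ?_)
  have hN : a ≤ N + a := by simp
  calc ∑ n ∈ Finset.range N, |f (n + a)|
      ≤ ∑ n ∈ Finset.range N,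
          ((∫ x in (n + a)..(n + a + 1), |f x|) + ∫ x in (n + a)..(n + a + 1), |deriv f x|) :=
        Finset.sum_le_sum fun n _ => by
          have h₁ := abs_nat_add_sub_integral_le hf hf' n
          have h₂ := intervalIntegral.abs_integral_le_integral_abs (f := f) (μ := volume)
            (by linarith : (n : ℝ) + a ≤ n + a + 1)
          linarith [abs_sub_abs_le_abs_sub (f (n + a)) (∫ x in (n + a)..(n + a + 1), f x)]
    _ = (∫ x in a..(N + a), |f x|) + ∫ x in a..(N + a), |deriv f x| := by
        rw [Finset.sum_add_distrib, sum_range_integral_nat_add hfi.abs,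
          sum_range_integral_nat_add hf'.abs]
    _ ≤ _ := add_le_add
        (intervalIntegral_le_integral_Ioi hfi.abs (fun _ _ => abs_nonneg _) hN)
        (intervalIntegral_le_integral_Ioi hf'.abs (fun _ _ => abs_nonneg _) hN)

theorem abs_tsum_nat_add_sub_integral_le {f : ℝ → ℝ} {a : ℝ}
    (hf : ∀ x ∈ Ici a, DifferentiableAt ℝ f x) (hfi : IntegrableOn f (Ioi a))
    (hf' : IntegrableOn (deriv f) (Ioi a)) :
    |∑' n : ℕ, f (n + a) - ∫ x in Ioi a, f x| ≤ ∫ x in Ioi a, |deriv f x| := by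
  have hsum := (summable_nat_add_of_integrableOn_deriv hf hfi hf').hasSum.tendsto_sum_nat
  have hint := intervalIntegral_tendsto_integral_Ioi a hfi
    (tendsto_atTop_add_const_right _ a tendsto_natCast_atTop_atTop)
  refine le_of_tendsto (hsum.sub hint).abs (Eventually.of_forall fun N => ?_)
  calc |∑ n ∈ Finset.range N, f (n + a) - ∫ x in a..(N + a), f x|
      = |∑ n ∈ Finset.range N, (f (n + a) - ∫ x in (n + a)..(n + a + 1), f x)| := by
        rw [Finset.sum_sub_distrib, sum_range_integral_nat_add hfi]
    _ ≤ ∑ n ∈ Finset.range N, ∫ x in (n + a)..(n + a + 1), |deriv f x| :=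
        (Finset.abs_sum_le_sum_abs _ _).trans
          (Finset.sum_le_sum fun n _ => abs_nat_add_sub_integral_le hf hf' n)
    _ = ∫ x in a..(N + a), |deriv f x| := sum_range_integral_nat_add hf'.abs N
    _ ≤ ∫ x in Ioi a, |deriv f x| :=
        intervalIntegral_le_integral_Ioi hf'.abs (fun _ _ => abs_nonneg _) (by simp)

theorem integral_Ioi_one_rpow_mul_exp_neg_le {ν t b : ℝ} (hν : 0 < ν) (ht : 0 < t) (hb : 0 < b) :
    ∫ x in Ioi 1, x ^ (t - 1) * exp (-b * x ^ ν) ≤ Gamma (t / ν) / ν * b ^ (-(t / ν)) := by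
  have hint := integrableOn_rpow_mul_exp_neg_mul_rpow (by linarith : -1 < t - 1) hν hb
  calc ∫ x in Ioi 1, x ^ (t - 1) * exp (-b * x ^ ν)
      ≤ ∫ x in Ioi 0, x ^ (t - 1) * exp (-b * x ^ ν) :=
        setIntegral_mono_set hint
          ((ae_restrict_mem measurableSet_Ioi).mono fun x (hx : 0 < x) => by positivity)
          (Ioi_subset_Ioi zero_le_one).eventuallyLE
    _ = Gamma (t / ν) / ν * b ^ (-(t / ν)) := by
        rw [integral_rpow_mul_exp_neg_mul_rpow hν (by linarith) hb, sub_add_cancel, neg_div]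
        ring

theorem exists_integral_abs_le_of_isBigO {ν s c : ℝ} (hν : 0 < ν) (hs : 0 < s) (hc : 0 < c)
    {A B : ℝ → ℝ} (hA : A =O[𝓟 (Ici 1)] fun x => x ^ (s - 1))
    (hB : B =O[𝓟 (Ici 1)] fun x => x ^ (s + ν - 1)) :
    ∃ K ≥ 0, ∀ ρ > 0, ∀ g : ℝ → ℝ, AEStronglyMeasurable g (volume.restrict (Ioi 1)) →
      (∀ x ∈ Ici 1, |g x| ≤ (|A x| + ρ * |B x|) * exp (-ρ * (c * x ^ ν))) →
      IntegrableOn g (Ioi 1) ∧ ∫ x in Ioi 1, |g x| ≤ K * ρ ^ (-(s / ν)) := by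
  obtain ⟨C₁, hC₁, hA⟩ := hA.exists_nonneg
  obtain ⟨C₂, hC₂, hB⟩ := hB.exists_nonneg
  rw [isBigOWith_principal] at hA hB
  refine ⟨C₁ * (Gamma (s / ν) / ν * c ^ (-(s / ν)))
    + C₂ * (Gamma ((s + ν) / ν) / ν * c ^ (-((s + ν) / ν))), by positivity, ?_⟩
  intro ρ hρ g hgm hg
  set w : ℝ → ℝ → ℝ := fun t x => x ^ (t - 1) * exp (-(ρ * c) * x ^ ν)
  have hw : ∀ t > 0, IntegrableOn (w t) (Ioi 1) := fun t ht =>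
    (integrableOn_rpow_mul_exp_neg_mul_rpow (by linarith) hν (by positivity)).mono_set
      (Ioi_subset_Ioi zero_le_one)
  have hwle : ∀ t > 0, ∫ x in Ioi 1, w t x ≤ Gamma (t / ν) / ν * c ^ (-(t / ν)) * ρ ^ (-(t / ν)) :=
    fun t ht => (integral_Ioi_one_rpow_mul_exp_neg_le hν ht (by positivity)).trans_eq
      (by rw [mul_rpow hρ.le hc.le]; ring)
  have hmaj : ∀ x ∈ Ioi 1, |g x| ≤ C₁ * w s x + ρ * C₂ * w (s + ν) x := fun x hx => by
    have hx0 : 0 < x := zero_lt_one.trans hx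
    refine (hg x (mem_Ici_of_Ioi hx)).trans ?_
    have h₁ := hA x (mem_Ici_of_Ioi hx)
    have h₂ := hB x (mem_Ici_of_Ioi hx)
    simp only [Real.norm_eq_abs, abs_of_pos (rpow_pos_of_pos hx0 _)] at h₁ h₂
    calc (|A x| + ρ * |B x|) * exp (-ρ * (c * x ^ ν))
        ≤ (C₁ * x ^ (s - 1) + ρ * (C₂ * x ^ (s + ν - 1))) * exp (-(ρ * c) * x ^ ν) := by
          rw [← mul_assoc, ← neg_mul]; gcongr
      _ = C₁ * w s x + ρ * C₂ * w (s + ν) x := by simp only [w]; ring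
  have hmaj_int : IntegrableOn (fun x => C₁ * w s x + ρ * C₂ * w (s + ν) x) (Ioi 1) :=
    ((hw s hs).const_mul _).add ((hw (s + ν) (by positivity)).const_mul _)
  have hint : IntegrableOn g (Ioi 1) :=
    hmaj_int.mono' hgm ((ae_restrict_mem measurableSet_Ioi).mono fun x hx => hmaj x hx)
  refine ⟨hint, ?_⟩
  calc ∫ x in Ioi 1, |g x| ≤ ∫ x in Ioi 1, (C₁ * w s x + ρ * C₂ * w (s + ν) x) :=
        setIntegral_mono_on hint.abs hmaj_int measurableSet_Ioi hmaj
    _ = C₁ * (∫ x in Ioi 1, w s x) + ρ * C₂ * ∫ x in Ioi 1, w (s + ν) x := by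
        rw [integral_add ((hw s hs).const_mul _) ((hw (s + ν) (by positivity)).const_mul _),
          integral_const_mul, integral_const_mul]
    _ ≤ C₁ * (Gamma (s / ν) / ν * c ^ (-(s / ν)) * ρ ^ (-(s / ν)))
          + ρ * C₂ * (Gamma ((s + ν) / ν) / ν * c ^ (-((s + ν) / ν)) * ρ ^ (-((s + ν) / ν))) := by
        gcongr
        exacts [hwle s hs, hwle (s + ν) (by positivity)]
    _ = _ := by
        have hρpow : ρ ^ (-(s / ν)) = ρ * ρ ^ (-((s + ν) / ν)) := by
          rw [show -(s / ν) = 1 + -((s + ν) / ν) by field_simp; ring, rpow_add hρ, rpow_one]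
        rw [hρpow]
        ring

theorem abs_integral_Ioi_one_rpow_mul_exp_neg_sub_gamma_le {ν s ρ : ℝ} (hν : 0 < ν) (hs : 0 ≤ s)
    (hρ : 0 < ρ) :
    |(∫ x in Ioi 1, x ^ s * exp (-ρ * x ^ ν)) - Gamma ((s + 1) / ν) / ν * ρ ^ (-(s + 1) / ν)|
      ≤ 1 := by
  set h : ℝ → ℝ := fun x => x ^ s * exp (-ρ * x ^ ν)
  have hint : IntegrableOn h (Ioi 0) :=
    integrableOn_rpow_mul_exp_neg_mul_rpow (by linarith) hν hρ
  have hgamma : Gamma ((s + 1) / ν) / ν * ρ ^ (-(s + 1) / ν)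
      = (∫ x in Ioc 0 1, h x) + ∫ x in Ioi 1, h x := by
    rw [← setIntegral_union (Ioc_disjoint_Ioi le_rfl) measurableSet_Ioi
      (hint.mono_set Ioc_subset_Ioi_self) (hint.mono_set (Ioi_subset_Ioi zero_le_one)),
      Ioc_union_Ioi_eq_Ioi zero_le_one, integral_rpow_mul_exp_neg_mul_rpow hν (by linarith) hρ]
    ring
  have hh : ∀ x ∈ Ioc (0 : ℝ) 1, 0 ≤ h x ∧ h x ≤ 1 := fun x ⟨hx0, hx1⟩ =>
    ⟨by positivity, mul_le_one₀ (rpow_le_one hx0.le hx1 hs) (exp_pos _).le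
      (exp_le_one_iff.2 (by nlinarith [rpow_nonneg hx0.le ν]))⟩
  have hnonneg : 0 ≤ ∫ x in Ioc 0 1, h x :=
    setIntegral_nonneg measurableSet_Ioc fun x hx => (hh x hx).1
  have hle : ∫ x in Ioc 0 1, h x ≤ 1 := by
    calc ∫ x in Ioc 0 1, h x ≤ ∫ x in Ioc (0 : ℝ) 1, (1 : ℝ) :=
          setIntegral_mono_on (hint.mono_set Ioc_subset_Ioi_self)
            (integrableOn_const measure_Ioc_lt_top.ne) measurableSet_Ioc fun x hx => (hh x hx).2
      _ = 1 := by simp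
  rw [hgamma, sub_add_cancel_right, abs_neg, abs_of_nonneg hnonneg]
  exact hle

section DampedSum

variable {ν s c : ℝ} {a φ : ℝ → ℝ}

theorem integrableOn_Ioi_one_mul_exp_neg (hν : 0 < ν) (hs : -1 < s) (hc : 0 < c)
    (ha : ContinuousOn a (Ioi 1)) (hφ : ContinuousOn φ (Ioi 1))
    (ha_big : a =O[𝓟 (Ici 1)] fun x => x ^ s) (hφ_ge : ∀ x ∈ Ici 1, c * x ^ ν ≤ φ x)
    {ρ : ℝ} (hρ : 0 < ρ) : IntegrableOn (fun x => a x * exp (-ρ * φ x)) (Ioi 1) := by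
  obtain ⟨K, -, hK⟩ := exists_integral_abs_le_of_isBigO hν (by linarith : 0 < s + 1) hc
    (by simpa using ha_big) (isBigO_zero (fun x : ℝ => x ^ (s + 1 + ν - 1)) _)
  have hcont : ContinuousOn (fun x => a x * exp (-ρ * φ x)) (Ioi 1) := by fun_prop
  refine (hK ρ hρ _ (hcont.aestronglyMeasurable measurableSet_Ioi) fun x hx => ?_).1
  rw [abs_mul, abs_of_pos (exp_pos _), abs_zero, mul_zero, add_zero]
  exact mul_le_mul_of_nonneg_left (exp_neg_mul_le_exp_neg_mul hρ.le (hφ_ge x hx)) (abs_nonneg _)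

theorem exists_abs_tsum_sub_integral_le (hν : 0 < ν) (hs : 0 < s) (hc : 0 < c)
    (ha : ∀ x ∈ Ici 1, DifferentiableAt ℝ a x) (hφ : ∀ x ∈ Ici 1, DifferentiableAt ℝ φ x)
    (ha_big : a =O[𝓟 (Ici 1)] fun x => x ^ s)
    (ha' : deriv a =O[𝓟 (Ici 1)] fun x => x ^ (s - 1))
    (hφ' : deriv φ =O[𝓟 (Ici 1)] fun x => x ^ (ν - 1)) (hφ_ge : ∀ x ∈ Ici 1, c * x ^ ν ≤ φ x) :
    ∃ K ≥ 0, ∀ ρ > 0, |∑' n : ℕ, a (n + 1) * exp (-ρ * φ (n + 1)) -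
      ∫ x in Ioi 1, a x * exp (-ρ * φ x)| ≤ K * ρ ^ (-(s / ν)) := by
  obtain ⟨K, hK0, hK⟩ := exists_integral_abs_le_of_isBigO hν hs hc ha'
    (ha_big.mul_rpow hφ' (by ring))
  refine ⟨K, hK0, fun ρ hρ => ?_⟩
  set f : ℝ → ℝ := fun x => a x * exp (-ρ * φ x)
  have hf : ∀ x ∈ Ici 1,
      HasDerivAt f ((deriv a x - ρ * (a x * deriv φ x)) * exp (-ρ * φ x)) x := fun x hx =>
    ((ha x hx).hasDerivAt.mul ((hφ x hx).hasDerivAt.const_mul (-ρ)).exp).congr_deriv (by ring)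
  have hf' : ∀ x ∈ Ici 1,
      |deriv f x| ≤ (|deriv a x| + ρ * |a x * deriv φ x|) * exp (-ρ * (c * x ^ ν)) := by
    intro x hx
    rw [(hf x hx).deriv, abs_mul, abs_of_pos (exp_pos _)]
    refine mul_le_mul ?_ (exp_neg_mul_le_exp_neg_mul hρ.le (hφ_ge x hx)) (exp_pos _).le
      (by positivity)
    exact (abs_sub _ _).trans_eq (by rw [abs_mul, abs_of_pos hρ])
  have hcont : ContinuousOn a (Ioi 1) ∧ ContinuousOn φ (Ioi 1) :=
    ⟨fun x hx => (ha x (mem_Ici_of_Ioi hx)).continuousAt.continuousWithinAt,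
      fun x hx => (hφ x (mem_Ici_of_Ioi hx)).continuousAt.continuousWithinAt⟩
  obtain ⟨hf'_int, hf'_le⟩ := hK ρ hρ (deriv f) (aestronglyMeasurable_deriv f _) hf'
  exact (abs_tsum_nat_add_sub_integral_le (fun x hx => (hf x hx).differentiableAt)
    (integrableOn_Ioi_one_mul_exp_neg hν (by linarith) hc hcont.1 hcont.2 ha_big hφ_ge hρ)
    hf'_int).trans
    hf'_le

theorem exists_abs_integral_sub_integral_rpow_le (hν : 0 < ν) (hs : 0 < s) (hc : 0 < c)
    (ha : ContinuousOn a (Ioi 1)) (hφ : ContinuousOn φ (Ioi 1))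
    (ha_big : a =O[𝓟 (Ici 1)] fun x => x ^ s)
    (ha_sub : (fun x => a x - x ^ s) =O[𝓟 (Ici 1)] fun x => x ^ (s - 1))
    (hφ_sub : (fun x => φ x - x ^ ν) =O[𝓟 (Ici 1)] fun x => x ^ (ν - 1))
    (hφ_ge : ∀ x ∈ Ici 1, c * x ^ ν ≤ φ x) :
    ∃ K ≥ 0, ∀ ρ > 0, |(∫ x in Ioi 1, a x * exp (-ρ * φ x)) -
      ∫ x in Ioi 1, x ^ s * exp (-ρ * x ^ ν)| ≤ K * ρ ^ (-(s / ν)) := by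
  have hc' : 0 < min c 1 := lt_min hc one_pos
  obtain ⟨K, hK0, hK⟩ := exists_integral_abs_le_of_isBigO hν hs hc' ha_sub
    ((isBigO_refl (fun x : ℝ => x ^ s) _).mul_rpow hφ_sub (by ring))
  refine ⟨K, hK0, fun ρ hρ => ?_⟩
  have hle : ∀ x ∈ Ici 1, |a x * exp (-ρ * φ x) - x ^ s * exp (-ρ * x ^ ν)| ≤
      (|a x - x ^ s| + ρ * |x ^ s * (φ x - x ^ ν)|) * exp (-ρ * (min c 1 * x ^ ν)) := by
    intro x (hx : 1 ≤ x)
    have hxν : 0 ≤ x ^ ν := by positivity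
    have hφ' : min c 1 * x ^ ν ≤ φ x :=
      (mul_le_mul_of_nonneg_right (min_le_left c 1) hxν).trans (hφ_ge x hx)
    have hν' : min c 1 * x ^ ν ≤ x ^ ν :=
      mul_le_of_le_one_left hxν (min_le_right c 1)
    have hexp := abs_exp_neg_sub_exp_neg_le (mul_le_mul_of_nonneg_left hφ' hρ.le)
      (mul_le_mul_of_nonneg_left hν' hρ.le)
    simp only [← neg_mul, ← mul_sub, abs_mul, abs_of_pos hρ] at hexp
    calc |a x * exp (-ρ * φ x) - x ^ s * exp (-ρ * x ^ ν)|
        = |(a x - x ^ s) * exp (-ρ * φ x) + x ^ s * (exp (-ρ * φ x) - exp (-ρ * x ^ ν))| := by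
          ring_nf
      _ ≤ |a x - x ^ s| * exp (-ρ * (min c 1 * x ^ ν)) +
          |x ^ s| * (exp (-ρ * (min c 1 * x ^ ν)) * (ρ * |φ x - x ^ ν|)) := by
          refine (abs_add_le _ _).trans (add_le_add ?_ ?_) <;> rw [abs_mul]
          · rw [abs_of_pos (exp_pos _)]
            exact mul_le_mul_of_nonneg_left (exp_neg_mul_le_exp_neg_mul hρ.le hφ') (abs_nonneg _)
          · exact mul_le_mul_of_nonneg_left hexp (abs_nonneg _)
      _ = _ := by rw [abs_mul]; ring
  have hf := integrableOn_Ioi_one_mul_exp_neg hν (by linarith) hc ha hφ ha_big hφ_ge hρ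
  have hh : IntegrableOn (fun x : ℝ => x ^ s * exp (-ρ * x ^ ν)) (Ioi 1) :=
    (integrableOn_rpow_mul_exp_neg_mul_rpow (by linarith) hν hρ).mono_set
      (Ioi_subset_Ioi zero_le_one)
  obtain ⟨-, hdiff⟩ := hK ρ hρ _ (hf.sub hh).aestronglyMeasurable hle
  rw [← integral_sub hf hh]
  exact (abs_integral_le_integral_abs).trans hdiff

theorem exists_abs_tsum_mul_exp_neg_sub_gamma_le (hν : 0 < ν) (hs : 0 < s) (hc : 0 < c)
    (ha : ∀ x ∈ Ici 1, DifferentiableAt ℝ a x) (hφ : ∀ x ∈ Ici 1, DifferentiableAt ℝ φ x)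
    (ha_sub : (fun x => a x - x ^ s) =O[𝓟 (Ici 1)] fun x => x ^ (s - 1))
    (ha' : deriv a =O[𝓟 (Ici 1)] fun x => x ^ (s - 1))
    (hφ_sub : (fun x => φ x - x ^ ν) =O[𝓟 (Ici 1)] fun x => x ^ (ν - 1))
    (hφ' : deriv φ =O[𝓟 (Ici 1)] fun x => x ^ (ν - 1)) (hφ_ge : ∀ x ∈ Ici 1, c * x ^ ν ≤ φ x) :
    ∃ C > 0, ∀ ρ ∈ Ioo 0 1, |∑' n : ℕ, a (n + 1) * exp (-ρ * φ (n + 1)) -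
      Gamma ((s + 1) / ν) / ν * ρ ^ (-(s + 1) / ν)| ≤ C * ρ ^ (-(s / ν)) := by
  have ha_big : a =O[𝓟 (Ici 1)] fun x => x ^ s :=
    (ha_sub.trans (isBigO_rpow_rpow_of_le (by linarith))).add (isBigO_refl _ _)
      |>.congr_left fun x => sub_add_cancel _ _
  have hcont : ∀ {g : ℝ → ℝ}, (∀ x ∈ Ici 1, DifferentiableAt ℝ g x) → ContinuousOn g (Ioi 1) :=
    fun hg x hx => (hg x (mem_Ici_of_Ioi hx)).continuousAt.continuousWithinAt
  obtain ⟨K₁, hK₁, h_sum⟩ := exists_abs_tsum_sub_integral_le hν hs hc ha hφ ha_big ha' hφ' hφ_ge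
  obtain ⟨K₂, hK₂, h_int⟩ := exists_abs_integral_sub_integral_rpow_le hν hs hc (hcont ha)
    (hcont hφ) ha_big ha_sub hφ_sub hφ_ge
  refine ⟨K₁ + K₂ + 1, by positivity, fun ρ ⟨hρ0, hρ1⟩ => ?_⟩
  have h_gamma := abs_integral_Ioi_one_rpow_mul_exp_neg_sub_gamma_le hν hs.le hρ0
  have hρ_pow : 1 ≤ ρ ^ (-(s / ν)) :=
    one_le_rpow_of_pos_of_le_one_of_nonpos hρ0 hρ1.le (neg_nonpos.2 (div_pos hs hν).le)
  linarith [h_sum ρ hρ0, h_int ρ hρ0,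
    abs_sub_le (∑' n : ℕ, a (n + 1) * exp (-ρ * φ (n + 1))) (∫ x in Ioi 1, a x * exp (-ρ * φ x))
      (Gamma ((s + 1) / ν) / ν * ρ ^ (-(s + 1) / ν)),
    abs_sub_le (∫ x in Ioi 1, a x * exp (-ρ * φ x)) (∫ x in Ioi 1, x ^ s * exp (-ρ * x ^ ν))
      (Gamma ((s + 1) / ν) / ν * ρ ^ (-(s + 1) / ν))]

end DampedSum

theorem stmt13_general (ν : ℕ) (hν : 1 ≤ ν) (q : Polynomial ℝ) (hq : q.Monic)
    (hdeg : q.natDegree = ν) (hqpos : ∀ x : ℝ, 1 ≤ x → 0 < q.eval x)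
    (r : ℕ) (hr : 1 ≤ r) (Q : Polynomial ℝ) (hQ : Q.Monic)
    (hQdeg : Q.natDegree = r) (hQpos : ∀ x : ℝ, 0 < x → 0 < Q.eval x)
    (d : ℝ) (hd : 0 < d) (p : ℕ) :
    ∃ C > 0, ∃ ρ₀ > 0, ∀ ρ ∈ Set.Ioo (0 : ℝ) ρ₀,
      |(∑' l : ℕ, ((l + 1 : ℕ) : ℝ) ^ p * (Q.eval ((l + 1 : ℕ) : ℝ)) ^ d *
          Real.exp (-ρ * q.eval ((l + 1 : ℕ) : ℝ))) -
        Real.Gamma ((p + r * d + 1) / ν) / ν * ρ ^ (-(p + r * d + 1) / ν)|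
        ≤ C * ρ ^ (-((p + r * d) / ν)) := by
  subst hdeg hQdeg
  have hQpos' : ∀ x ∈ Ici (1 : ℝ), 0 < Q.eval x := fun x hx => hQpos x (zero_lt_one.trans_le hx)
  have hr' : (0 : ℝ) < Q.natDegree := Nat.cast_pos.2 hr
  obtain ⟨c, hc, hqc⟩ := exists_pos_mul_rpow_le_eval hqpos
  obtain ⟨C, hC, h⟩ := exists_abs_tsum_mul_exp_neg_sub_gamma_le
    (a := fun x => x ^ (p : ℝ) * Q.eval x ^ d) (φ := fun x => q.eval x)
    (Nat.cast_pos.2 hν) (by positivity) hc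
    (fun x hx => (hasDerivAt_rpow_mul_eval_rpow p d (zero_lt_one.trans_le hx)
      (hQpos' x hx)).differentiableAt)
    (fun _ _ => q.differentiableAt) (hQ.isBigO_rpow_mul_eval_rpow_sub hr hQpos' p d)
    (isBigO_deriv_rpow_mul_eval_rpow hr hQpos' p d) (hq.isBigO_sub_rpow hν)
    (isBigO_deriv_eval hν) hqc
  refine ⟨C, hC, 1, one_pos, fun ρ hρ => ?_⟩
  simpa using h ρ hρ

theorem stmt13 (ν : ℕ) (hν : 1 ≤ ν) (q : Polynomial ℝ) (hq : q.Monic)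
    (hdeg : q.natDegree = ν) (hqpos : ∀ x : ℝ, 1 ≤ x → 0 < q.eval x)
    (hqmono : MonotoneOn q.eval (Set.Ici (1 : ℝ)))
    (r : ℕ) (hr : 1 ≤ r) (Q : Polynomial ℝ) (hQ : Q.Monic)
    (hQdeg : Q.natDegree = r) (hQpos : ∀ x : ℝ, 0 < x → 0 < Q.eval x)
    (d : ℝ) (hd : 0 < d) (p : ℕ) :
    ∃ C > 0, ∃ ρ₀ > 0, ∀ ρ ∈ Set.Ioo (0 : ℝ) ρ₀,
      |(∑' l : ℕ, ((l + 1 : ℕ) : ℝ) ^ p * (Q.eval ((l + 1 : ℕ) : ℝ)) ^ d *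
          Real.exp (-ρ * q.eval ((l + 1 : ℕ) : ℝ))) -
        Real.Gamma ((p + r * d + 1) / ν) / ν * ρ ^ (-(p + r * d + 1) / ν)|
        ≤ C * ρ ^ (-((p + r * d) / ν)) :=
  stmt13_general ν hν q hq hdeg hqpos r hr Q hQ hQdeg hQpos d hd p
end
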